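/- Let n ≥ 5 be an integer, x ≥ 0 a real number, and a_0(n), a_1(n) real sequences. Then V_{n,1}(e_3; x) = (2a_0(n) − a_1(n))x³ + (1/((n−2)(n−3)(n−4)))·[a_0(n)(30+54x+42x²+60x³) + a_1(n)(−24−54x−42x²−36x³) + n{a_0(n)(54x+63x²−30x³) + a_1(n)(−36x−54x²+6x³)} + n²{a_0(n)(21x²+30x³) + a_1(n)(−12x²−18x³)}], where e_3(t) = t³ (in particular the defining series and integrals converge absolutely). -/

import Mathlib

open MeasureTheory Filter Topology

/-- Baskakov basis function `p_{n,k}(x) = C(n+k-1, k) x^k / (1+x)^{n+k}`. -/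
noncomputable def bask (n k : ℕ) (x : ℝ) : ℝ :=
  (Nat.choose (n + k - 1) k : ℝ) * x ^ k / (1 + x) ^ (n + k)

/-- Modified basis `p^1_{n,k}(x) = a(x,n) p_{n+1,k}(x) + b(x,n) p_{n+1,k-1}(x)`,
with `p_{n+1,-1} = 0`. -/
noncomputable def p1 (a0 a1 : ℕ → ℝ) (n k : ℕ) (x : ℝ) : ℝ :=
  (a0 n + a1 n * x) * bask (n + 1) k x
    + (a0 n - a1 n * (1 + x)) * (if k = 0 then 0 else bask (n + 1) (k - 1) x)

/-- First-order modified Baskakov–Durrmeyer operator. -/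
noncomputable def V1 (a0 a1 : ℕ → ℝ) (n : ℕ) (f : ℝ → ℝ) (x : ℝ) : ℝ :=
  ((n : ℝ) - 1) * ∑' k : ℕ, p1 a0 a1 n k x * ∫ t in Set.Ioi (0 : ℝ), bask n k t * f t

/-!
The integrals are Beta integrals: integrating by parts against `(1 + t)⁻ᵇ` gives
`∫₀^∞ tᵃ / (1 + t)^(a+c+2) dt = a! c! / (a+c+1)!`, hence
`∫₀^∞ p_{n,k}(t) t³ dt = (k+1)(k+2)(k+3) / ((n-1)(n-2)(n-3)(n-4))`.
The sums are Baskakov moments: the negative binomial series gives `∑ₖ p_{N,k}(x) = 1`, and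
`(k+1) p_{N,k+1} = N x p_{N+1,k}` turns this into
`∑ₖ p_{N,k}(x) k(k-1)⋯(k-j+1) = N(N+1)⋯(N+j-1) xʲ`.
Expanding `(k+1)(k+2)(k+3)`, and `(k+2)(k+3)(k+4)` for the shifted term `p_{n+1,k-1}`, in falling
factorials of `k` evaluates `V_{n,1}(e₃; x)`; what remains is a rational identity in `n`.
-/

open Set Polynomial
open scoped Nat

lemma tendsto_pow_div_one_add_pow_atTop {a b : ℕ} (h : a < b) :
    Tendsto (fun t : ℝ => t ^ a / (1 + t) ^ b) atTop (𝓝 0) := by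
  have hdeg : (X ^ a : ℝ[X]).degree < ((X + C 1) ^ b : ℝ[X]).degree := by
    rw [degree_pow, degree_pow, degree_X, degree_X_add_C]
    simpa using h
  simpa [add_comm] using div_tendsto_atTop_zero_of_degree_lt _ _ hdeg

lemma integrableOn_pow_div_one_add_pow {a b : ℕ} (h : a + 2 ≤ b) :
    IntegrableOn (fun t : ℝ => t ^ a / (1 + t) ^ b) (Ioi 0) := by
  refine ((integrable_one_add_norm (E := ℝ) (μ := volume) (r := 2) (by simp)).integrableOn).mono'
    ((Continuous.continuousOn (by fun_prop)).div (by fun_prop)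
      (fun t (ht : 0 < t) => by positivity) |>.aestronglyMeasurable measurableSet_Ioi) ?_
  filter_upwards [ae_restrict_mem measurableSet_Ioi] with t (ht : 0 < t)
  rw [Real.norm_of_nonneg (by positivity), Real.norm_of_nonneg ht.le,
    Real.rpow_neg (by positivity), Real.rpow_two, div_le_iff₀ (by positivity),
    ← div_eq_inv_mul, le_div_iff₀ (by positivity)]
  calc t ^ a * (1 + t) ^ 2 ≤ (1 + t) ^ a * (1 + t) ^ 2 := by gcongr; linarith
    _ = (1 + t) ^ (a + 2) := by rw [pow_add]
    _ ≤ (1 + t) ^ b := pow_le_pow_right₀ (by linarith) h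

lemma integral_inv_one_add_pow (c : ℕ) :
    ∫ t in Ioi (0 : ℝ), ((1 + t) ^ (c + 2))⁻¹ = 1 / (c + 1) := by
  have hderiv : ∀ t ∈ Ici (0 : ℝ), HasDerivAt (fun s : ℝ => -((1 + s) ^ (c + 1))⁻¹ / (c + 1))
      ((1 + t) ^ (c + 2))⁻¹ t := by
    intro t (ht : 0 ≤ t)
    have h1t : 1 + t ≠ 0 := by positivity
    refine ((((hasDerivAt_id' t).const_add 1).fun_pow (c + 1)).fun_inv
      (pow_ne_zero _ h1t)).neg.div_const ((c : ℝ) + 1) |>.congr_deriv ?_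
    field_simp
    push_cast
    ring
  have hint : IntegrableOn (fun t : ℝ => ((1 + t) ^ (c + 2))⁻¹) (Ioi 0) := by
    simpa using integrableOn_pow_div_one_add_pow (a := 0) (b := c + 2) (by omega)
  have hlim : Tendsto (fun s : ℝ => -((1 + s) ^ (c + 1))⁻¹ / (c + 1)) atTop (𝓝 0) := by
    simpa using ((tendsto_pow_div_one_add_pow_atTop (a := 0) (b := c + 1) (by omega)).neg
      |>.div_const ((c : ℝ) + 1))
  rw [integral_Ioi_of_hasDerivAt_of_tendsto' hderiv hint hlim]
  simp [neg_div]

lemma integral_pow_succ_div_one_add_pow_succ {a b : ℕ} (h : a + 1 ≤ b) :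
    ∫ t in Ioi (0 : ℝ), t ^ (a + 1) / (1 + t) ^ (b + 2)
      = (a + 1) / (b + 1) * ∫ t in Ioi (0 : ℝ), t ^ a / (1 + t) ^ (b + 1) := by
  have i1 := integrableOn_pow_div_one_add_pow (a := a + 1) (b := b + 2) (by omega)
  have i2 := integrableOn_pow_div_one_add_pow (a := a) (b := b + 1) (by omega)
  have hderiv : ∀ t ∈ Ici (0 : ℝ), HasDerivAt (fun s : ℝ => -(s ^ (a + 1) / (1 + s) ^ (b + 1)))
      ((b + 1) * (t ^ (a + 1) / (1 + t) ^ (b + 2)) - (a + 1) * (t ^ a / (1 + t) ^ (b + 1)))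
      t := by
    intro t (ht : 0 ≤ t)
    have h1t : 1 + t ≠ 0 := by positivity
    refine ((hasDerivAt_pow (a + 1) t).fun_div (((hasDerivAt_id' t).const_add 1).fun_pow (b + 1))
      (pow_ne_zero _ h1t)).fun_neg.congr_deriv ?_
    field_simp
    push_cast
    ring
  have hlim : Tendsto (fun s : ℝ => -(s ^ (a + 1) / (1 + s) ^ (b + 1))) atTop (𝓝 0) := by
    simpa using (tendsto_pow_div_one_add_pow_atTop (a := a + 1) (b := b + 1) (by omega)).neg
  have hparts := integral_Ioi_of_hasDerivAt_of_tendsto' hderiv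
    ((i1.const_mul _).sub (i2.const_mul _)) hlim
  rw [integral_sub (i1.const_mul _) (i2.const_mul _), integral_const_mul, integral_const_mul,
    zero_pow (by omega), zero_div, neg_zero, sub_self] at hparts
  field_simp
  linarith

theorem integral_pow_div_one_add_pow (a c : ℕ) :
    ∫ t in Ioi (0 : ℝ), t ^ a / (1 + t) ^ (a + c + 2) = a ! * c ! / (a + c + 1)! := by
  induction a with
  | zero =>
    simp only [pow_zero, one_div, zero_add, Nat.factorial_zero, Nat.cast_one, one_mul,
      integral_inv_one_add_pow, Nat.factorial_succ, Nat.cast_mul]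
    field_simp
    push_cast
    ring
  | succ a ih =>
    rw [show a + 1 + c + 2 = a + c + 1 + 2 by omega,
      integral_pow_succ_div_one_add_pow_succ (by omega), show a + c + 1 + 1 = a + c + 2 by omega,
      ih, show a + 1 + c + 1 = a + c + 1 + 1 by omega, Nat.factorial_succ (a + c + 1),
      Nat.factorial_succ a]
    push_cast
    field_simp

lemma bask_mul_pow (n k r : ℕ) (t : ℝ) :
    bask n k t * t ^ r = (n + k - 1).choose k * (t ^ (k + r) / (1 + t) ^ (n + k)) := by
  rw [bask, pow_add]
  ring

lemma integrableOn_bask_mul_pow {n r : ℕ} (h : r + 2 ≤ n) (k : ℕ) :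
    IntegrableOn (fun t : ℝ => bask n k t * t ^ r) (Ioi 0) := by
  simp_rw [bask_mul_pow]
  exact (integrableOn_pow_div_one_add_pow (by omega)).const_mul _

lemma choose_mul_factorial_mul_descFactorial {n r : ℕ} (h : r + 2 ≤ n) (k : ℕ) :
    (n + k - 1).choose k * ((k + r)! * (n - r - 2)!) * (n - 1).descFactorial (r + 1)
      = (k + 1).ascFactorial r * (n + k - 1)! := by
  have hdesc := Nat.factorial_mul_descFactorial (show r + 1 ≤ n - 1 by omega)
  have hchoose := Nat.choose_mul_factorial_mul_factorial (show k ≤ n + k - 1 by omega)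
  rw [show n - 1 - (r + 1) = n - r - 2 by omega] at hdesc
  rw [show n + k - 1 - k = n - 1 by omega] at hchoose
  rw [← Nat.factorial_mul_ascFactorial, ← hchoose, ← hdesc]
  ring

theorem integral_bask_mul_pow {n r : ℕ} (h : r + 2 ≤ n) (k : ℕ) :
    ∫ t in Ioi (0 : ℝ), bask n k t * t ^ r
      = ((k + 1).ascFactorial r : ℝ) / (n - 1).descFactorial (r + 1) := by
  have hbeta := integral_pow_div_one_add_pow (k + r) (n - r - 2)
  rw [show k + r + (n - r - 2) + 2 = n + k by omega,
    show k + r + (n - r - 2) + 1 = n + k - 1 by omega] at hbeta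
  have hdesc : 0 < (n - 1).descFactorial (r + 1) := Nat.descFactorial_pos.mpr (by omega)
  simp_rw [bask_mul_pow]
  rw [integral_const_mul, hbeta, mul_div_assoc', div_eq_div_iff (by positivity) (by positivity)]
  exact_mod_cast choose_mul_factorial_mul_descFactorial h k

theorem integral_bask_mul_cube {n : ℕ} (hn : 5 ≤ n) (k : ℕ) :
    ∫ t in Ioi (0 : ℝ), bask n k t * t ^ 3
      = ((k : ℝ) + 1) * (k + 2) * (k + 3) / ((n - 1) * (n - 2) * (n - 3) * (n - 4)) := by
  obtain ⟨m, rfl⟩ : ∃ m, n = m + 5 := ⟨n - 5, by omega⟩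
  rw [integral_bask_mul_pow (by omega)]
  simp only [Nat.ascFactorial_succ, Nat.ascFactorial_zero, Nat.descFactorial_succ,
    Nat.descFactorial_zero, Nat.add_one_sub_one, Nat.reduceSubDiff, Nat.cast_mul, Nat.cast_add,
    Nat.cast_ofNat]
  push_cast
  ring

lemma bask_zero_left (k : ℕ) (x : ℝ) : bask 0 k x = if k = 0 then 1 else 0 := by
  rcases Nat.eq_zero_or_pos k with rfl | hk
  · simp [bask]
  · simp [bask, Nat.choose_eq_zero_of_lt (show k - 1 < k by omega), hk.ne']

lemma bask_succ_left (M k : ℕ) (x : ℝ) :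
    bask (M + 1) k x = (k + M).choose M * (x / (1 + x)) ^ k * ((1 + x) ^ (M + 1))⁻¹ := by
  rw [bask, show M + 1 + k - 1 = k + M by omega, Nat.choose_symm_add, div_pow,
    show M + 1 + k = k + (M + 1) by omega, pow_add, div_eq_mul_inv, mul_inv, div_eq_mul_inv]
  ring

lemma bask_succ_mul (N k : ℕ) (x : ℝ) :
    bask N (k + 1) x * (k + 1) = N * x * bask (N + 1) k x := by
  have hchoose := Nat.choose_succ_right_eq (N + k) k
  rw [show N + k - k = N by omega] at hchoose
  have hcast : ((N + k).choose (k + 1) : ℝ) * (k + 1) = (N + k).choose k * N := by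
    exact_mod_cast hchoose
  rw [bask, bask, show N + (k + 1) - 1 = N + k by omega, show N + 1 + k - 1 = N + k by omega,
    show N + (k + 1) = N + 1 + k by omega, pow_succ]
  linear_combination x ^ k * x / (1 + x) ^ (N + 1 + k) * hcast

section Moments

variable {x : ℝ}

theorem hasSum_bask (N : ℕ) (hx : 0 ≤ x) : HasSum (fun k => bask N k x) 1 := by
  rcases N with _ | M
  · simpa [bask_zero_left] using hasSum_ite_eq 0 (1 : ℝ)
  have h1x : 0 < 1 + x := by linarith
  have hr : ‖x / (1 + x)‖ < 1 := by
    rw [Real.norm_of_nonneg (by positivity), div_lt_one h1x]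
    linarith
  have hval : 1 / (1 - x / (1 + x)) ^ (M + 1) * ((1 + x) ^ (M + 1))⁻¹ = 1 := by
    rw [show 1 - x / (1 + x) = (1 + x)⁻¹ by field_simp; ring, inv_pow, one_div, inv_inv,
      mul_inv_cancel₀ (by positivity)]
  simpa only [← bask_succ_left, hval] using
    (hasSum_choose_mul_geometric_of_norm_lt_one M hr).mul_right ((1 + x) ^ (M + 1))⁻¹

theorem hasSum_bask_mul_descPochhammer (j N : ℕ) (hx : 0 ≤ x) :
    HasSum (fun k => bask N k x * (descPochhammer ℝ j).eval (k : ℝ))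
      ((ascPochhammer ℝ j).eval (N : ℝ) * x ^ j) := by
  induction j generalizing N with
  | zero => simpa using hasSum_bask N hx
  | succ j ih =>
    rw [← hasSum_nat_add_iff' 1]
    have hval : (ascPochhammer ℝ (j + 1)).eval (N : ℝ) * x ^ (j + 1)
          - ∑ k ∈ Finset.range 1, bask N k x * (descPochhammer ℝ (j + 1)).eval (k : ℝ)
        = N * x * ((ascPochhammer ℝ j).eval ((N + 1 : ℕ) : ℝ) * x ^ j) := by
      simp only [Finset.sum_range_one, Nat.cast_zero, descPochhammer_eval_zero, if_neg
        (Nat.succ_ne_zero j), mul_zero, sub_zero, ascPochhammer_succ_left, eval_mul, eval_X,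
        eval_comp, eval_add, eval_one, Nat.cast_succ, pow_succ]
      ring
    rw [hval]
    refine ((ih (N + 1)).mul_left (N * x)).congr_fun fun k => ?_
    rw [descPochhammer_succ_left, eval_mul, eval_X, eval_comp, eval_sub, eval_X, eval_one,
      Nat.cast_succ, add_sub_cancel_right, ← mul_assoc, bask_succ_mul, mul_assoc]

theorem hasSum_bask_mul_rising_cube (N : ℕ) (h : ℝ) (hx : 0 ≤ x) :
    HasSum (fun k => bask N k x * ((k + h) * (k + h + 1) * (k + h + 2)))
      (N * (N + 1) * (N + 2) * x ^ 3 + 3 * (h + 2) * (N * (N + 1)) * x ^ 2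
        + 3 * (h + 1) * (h + 2) * N * x + h * (h + 1) * (h + 2)) := by
  have H := fun j => hasSum_bask_mul_descPochhammer j N hx
  have hsum := (((H 3).add ((H 2).mul_left (3 * (h + 2)))).add
    ((H 1).mul_left (3 * (h + 1) * (h + 2)))).add ((H 0).mul_left (h * (h + 1) * (h + 2)))
  simp only [ascPochhammer_succ_right, descPochhammer_succ_right, ascPochhammer_zero,
    descPochhammer_zero, Nat.cast_zero, Nat.cast_one, Nat.cast_ofNat, add_zero, sub_zero,
    eval_mul, eval_add, eval_sub, eval_X, eval_one, eval_ofNat] at hsum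
  convert hsum using 1
  · ext k
    ring
  · ring

end Moments

theorem hasSum_p1_mul {a0 a1 : ℕ → ℝ} {n : ℕ} {x : ℝ} {w : ℕ → ℝ} {A B : ℝ}
    (hA : HasSum (fun k => bask (n + 1) k x * w k) A)
    (hB : HasSum (fun k => bask (n + 1) k x * w (k + 1)) B) :
    HasSum (fun k => p1 a0 a1 n k x * w k)
      ((a0 n + a1 n * x) * A + (a0 n - a1 n * (1 + x)) * B) := by
  have hshift : HasSum (fun k => (if k = 0 then 0 else bask (n + 1) (k - 1) x) * w k) B := by
    rw [← hasSum_nat_add_iff' 1]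
    simpa using hB
  refine ((hA.mul_left _).add (hshift.mul_left _)).congr_fun fun k => ?_
  rw [p1]
  ring

theorem V1_moment_e3 (n : ℕ) (hn : 5 ≤ n) (x : ℝ) (hx : 0 ≤ x) (a0 a1 : ℕ → ℝ) :
    (∀ k : ℕ, IntegrableOn (fun t : ℝ => bask n k t * t ^ 3) (Set.Ioi 0)) ∧
    Summable (fun k : ℕ =>
      |p1 a0 a1 n k x * ∫ t in Set.Ioi (0 : ℝ), bask n k t * t ^ 3|) ∧
    V1 a0 a1 n (fun t => t ^ 3) x =
      (2 * a0 n - a1 n) * x ^ 3 + (1 / (((n : ℝ) - 2) * ((n : ℝ) - 3) * ((n : ℝ) - 4))) *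
        (a0 n * (30 + 54 * x + 42 * x ^ 2 + 60 * x ^ 3)
          + a1 n * (-24 - 54 * x - 42 * x ^ 2 - 36 * x ^ 3)
          + (n : ℝ) * (a0 n * (54 * x + 63 * x ^ 2 - 30 * x ^ 3)
              + a1 n * (-36 * x - 54 * x ^ 2 + 6 * x ^ 3))
          + (n : ℝ) ^ 2 * (a0 n * (21 * x ^ 2 + 30 * x ^ 3)
              + a1 n * (-12 * x ^ 2 - 18 * x ^ 3))) := by
  have hsum := (hasSum_p1_mul (a0 := a0) (a1 := a1)
    (w := fun k => ((k : ℝ) + 1) * (k + 2) * (k + 3))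
    ((hasSum_bask_mul_rising_cube (n + 1) 1 hx).congr_fun fun k => by ring)
    ((hasSum_bask_mul_rising_cube (n + 1) 2 hx).congr_fun fun k => by push_cast; ring)).div_const
    (((n : ℝ) - 1) * (n - 2) * (n - 3) * (n - 4))
    |>.congr_fun (g := fun k => p1 a0 a1 n k x * ∫ t in Ioi (0 : ℝ), bask n k t * t ^ 3)
      fun k => by rw [integral_bask_mul_cube hn]; ring
  refine ⟨integrableOn_bask_mul_pow (by omega), hsum.summable.abs, ?_⟩
  have hn' : (5 : ℝ) ≤ n := by exact_mod_cast hn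
  have h1 : (n : ℝ) - 1 ≠ 0 := by linarith
  have h2 : (n : ℝ) - 2 ≠ 0 := by linarith
  have h3 : (n : ℝ) - 3 ≠ 0 := by linarith
  have h4 : (n : ℝ) - 4 ≠ 0 := by linarith
  rw [V1, hsum.tsum_eq]
  field_simp
  push_cast
  ring
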